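/- For every ε > 0 there exists a constant C_ε > 0 such that the following exact recovery statement holds for every squarefree positive integer N: if f, g : (ℤ/Nℤ)² → ℂ satisfy |supp(f)| + |supp(g)| < N^{2−2ε} / C_ε⁸ and f̂(m) = ĝ(m) for all m outside the parabola Σ = {(t, t²) : t ∈ ℤ/Nℤ}, then f = g. -/

import Mathlib

open scoped BigOperators

/-- Normalized Fourier transform on `(ℤ/Nℤ)²`:
`f̂(m) = N⁻¹ ∑ₓ f(x) e^{-2πi (x·m)/N}` where `x·m = x₁m₁ + x₂m₂`. -/
noncomputable def dft (N : ℕ) [NeZero N] (f : ZMod N × ZMod N → ℂ)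
    (m : ZMod N × ZMod N) : ℂ :=
  (N : ℂ)⁻¹ * ∑ x : ZMod N × ZMod N,
    f x * Complex.exp (-2 * Real.pi * Complex.I *
      (((x.1 * m.1 + x.2 * m.2).val : ℕ) : ℂ) / (N : ℂ))

/-- The parabola `Σ = {(t, t²) : t ∈ ℤ/Nℤ}` in `(ℤ/Nℤ)²`. -/
def parabola (N : ℕ) [NeZero N] : Finset (ZMod N × ZMod N) :=
  Finset.univ.image (fun t : ZMod N => (t, t ^ 2))

/-!
Put `h = f - g`. Its Fourier transform lives on the parabola, so by Fourier inversion `h` is a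
combination `∑ₜ bₜ ψₜ` of the characters `ψₜ(x) = e((x₁t + x₂t²)/N)`. Orthogonality gives
`‖h‖₂² = N² ∑ |bₜ|²`, and expanding `h² = ∑ bₛbₜ ψₛψₜ` gives `‖h‖₄⁴ ≤ N² r (∑ |bₜ|²)²`, where `r`
bounds the number of pairs `(s, t)` with prescribed `(s + t, s² + t²)`. Cauchy–Schwarz on the
support, `‖h‖₂⁴ ≤ |supp h| ‖h‖₄⁴`, then yields `N² ≤ r |supp h|`. For squarefree `N` the Chinese
remainder theorem gives `r ≤ 2^ω(N)`, as there are at most two solutions modulo each prime, and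
`2^ω(N) ≪_ε N^{2ε}`.
-/

open Finset Function ComplexConjugate

theorem sum_sum_mul_le_of_card_fiber_le {α β : Type*} [Fintype α] [DecidableEq β]
    (σ : α → β) (w : α → ℝ) {r : ℕ} (hr : ∀ p, #{q | σ q = σ p} ≤ r) :
    ∑ p, ∑ q with σ q = σ p, w p * w q ≤ r * ∑ p, w p ^ 2 := by
  have hswap : ∑ p, ∑ q with σ q = σ p, w q ^ 2 = ∑ p, ∑ q with σ q = σ p, w p ^ 2 := by
    simp only [sum_filter]
    rw [sum_comm]
    simp only [eq_comm]
  calc ∑ p, ∑ q with σ q = σ p, w p * w q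
      ≤ ∑ p, ∑ q with σ q = σ p, (w p ^ 2 + w q ^ 2) / 2 :=
        sum_le_sum fun p _ => sum_le_sum fun q _ => by linarith [two_mul_le_add_sq (w p) (w q)]
    _ = ∑ p, #{q | σ q = σ p} * w p ^ 2 := by
        simp only [← sum_div, sum_add_distrib, hswap, sum_const, nsmul_eq_mul]
        ring
    _ ≤ ∑ p, r * w p ^ 2 :=
        sum_le_sum fun p _ => mul_le_mul_of_nonneg_right (by exact_mod_cast hr p) (sq_nonneg _)
    _ = r * ∑ p, w p ^ 2 := (mul_sum ..).symm

theorem sq_sum_le_ncard_support_mul_sum_sq {α : Type*} [Fintype α] (u : α → ℝ) :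
    (∑ x, u x) ^ 2 ≤ (support u).ncard * ∑ x, u x ^ 2 := by
  classical
  have hsupp : (support u).ncard = #{x | u x ≠ 0} := by
    rw [← Set.ncard_coe_finset]; congr 1; ext; simp
  calc (∑ x, u x) ^ 2 = (∑ x with u x ≠ 0, u x) ^ 2 := by rw [sum_filter_ne_zero]
    _ ≤ #{x | u x ≠ 0} * ∑ x with u x ≠ 0, u x ^ 2 := sq_sum_le_card_mul_sum_sq
    _ ≤ (support u).ncard * ∑ x, u x ^ 2 := by
        rw [hsupp]
        gcongr
        exact subset_univ _

section Characters

variable {G ι : Type*} [AddCommGroup G] [Fintype G] [Fintype ι]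

theorem sum_norm_sq_sum_addChar (ψ : ι → AddChar G ℂ) (b : ι → ℂ) [DecidableEq (AddChar G ℂ)] :
    ((∑ x, ‖∑ i, b i * ψ i x‖ ^ 2 : ℝ) : ℂ) =
      Fintype.card G * ∑ i, ∑ j with ψ j = ψ i, b i * conj (b j) := by
  have hexpand : ∀ x, ((‖∑ i, b i * ψ i x‖ ^ 2 : ℝ) : ℂ) =
      ∑ i, ∑ j, b i * conj (b j) * (ψ i - ψ j) x := by
    intro x
    push_cast
    rw [← Complex.mul_conj', map_sum, sum_mul_sum]
    refine sum_congr rfl fun i _ => sum_congr rfl fun j _ => ?_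
    rw [AddChar.sub_apply, map_mul, ← AddChar.map_neg_eq_conj]
    ring
  rw [Complex.ofReal_sum]
  simp_rw [hexpand]
  rw [sum_comm]
  simp_rw [mul_sum, sum_filter]
  refine sum_congr rfl fun i _ => ?_
  rw [sum_comm]
  refine sum_congr rfl fun j _ => ?_
  simp only [← mul_sum, AddChar.sum_eq_ite, sub_eq_zero, eq_comm (a := ψ j)]
  split_ifs <;> ring

theorem sum_norm_sq_sum_addChar_of_injective {ψ : ι → AddChar G ℂ} (hψ : Injective ψ)
    (b : ι → ℂ) : ∑ x, ‖∑ i, b i * ψ i x‖ ^ 2 = Fintype.card G * ∑ i, ‖b i‖ ^ 2 := by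
  classical
  have h := sum_norm_sq_sum_addChar ψ b
  simp only [hψ.eq_iff, sum_filter, sum_ite_eq', mem_univ, if_true, Complex.mul_conj'] at h
  exact_mod_cast h

theorem sum_norm_pow_four_sum_addChar_le (ψ : ι → AddChar G ℂ) (b : ι → ℂ) {r : ℕ}
    (hr : ∀ p : ι × ι, #{q : ι × ι | ψ q.1 + ψ q.2 = ψ p.1 + ψ p.2} ≤ r) :
    ∑ x, ‖∑ i, b i * ψ i x‖ ^ 4 ≤ Fintype.card G * r * (∑ i, ‖b i‖ ^ 2) ^ 2 := by
  classical
  set Ψ : ι × ι → AddChar G ℂ := fun p => ψ p.1 + ψ p.2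
  set β : ι × ι → ℂ := fun p => b p.1 * b p.2
  have hsq : ∀ x, (∑ i, b i * ψ i x) ^ 2 = ∑ p, β p * Ψ p x := by
    intro x
    rw [sq, sum_mul_sum, ← univ_product_univ, sum_product]
    refine sum_congr rfl fun i _ => sum_congr rfl fun j _ => ?_
    simp only [β, Ψ, AddChar.add_apply]
    ring
  calc ∑ x, ‖∑ i, b i * ψ i x‖ ^ 4 = ‖((∑ x, ‖∑ p, β p * Ψ p x‖ ^ 2 : ℝ) : ℂ)‖ := by
        rw [Complex.norm_real, Real.norm_of_nonneg (by positivity)]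
        simp_rw [← hsq, norm_pow, ← pow_mul]
    _ = Fintype.card G * ‖∑ p, ∑ q with Ψ q = Ψ p, β p * conj (β q)‖ := by
        rw [sum_norm_sq_sum_addChar, norm_mul, Complex.norm_natCast]
    _ ≤ Fintype.card G * ∑ p, ∑ q with Ψ q = Ψ p, ‖β p‖ * ‖β q‖ := by
        gcongr
        refine (norm_sum_le _ _).trans (sum_le_sum fun p _ => (norm_sum_le _ _).trans ?_)
        simp only [norm_mul, Complex.norm_conj, le_refl]
    _ ≤ Fintype.card G * (r * ∑ p, ‖β p‖ ^ 2) := by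
        gcongr
        exact sum_sum_mul_le_of_card_fiber_le Ψ (fun p => ‖β p‖) hr
    _ = Fintype.card G * r * (∑ i, ‖b i‖ ^ 2) ^ 2 := by
        simp only [β, norm_mul, mul_pow, sq (∑ i, _), sum_mul_sum, ← univ_product_univ,
          sum_product]
        ring

theorem card_le_mul_ncard_support_of_eq_sum_addChar {ψ : ι → AddChar G ℂ} (hψ : Injective ψ)
    {r : ℕ} (hr : ∀ p : ι × ι, #{q : ι × ι | ψ q.1 + ψ q.2 = ψ p.1 + ψ p.2} ≤ r)
    {F : G → ℂ} (b : ι → ℂ) (hF : ∀ x, F x = ∑ i, b i * ψ i x) (hF0 : F ≠ 0) :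
    Fintype.card G ≤ r * (support F).ncard := by
  set A := ∑ i, ‖b i‖ ^ 2
  have h2 : ∑ x, ‖F x‖ ^ 2 = Fintype.card G * A := by
    simp only [hF, sum_norm_sq_sum_addChar_of_injective hψ, A]
  have h4 : ∑ x, ‖F x‖ ^ 4 ≤ Fintype.card G * r * A ^ 2 := by
    simp only [hF, A, sum_norm_pow_four_sum_addChar_le ψ b hr]
  have hCS : (∑ x, ‖F x‖ ^ 2) ^ 2 ≤ (support F).ncard * ∑ x, ‖F x‖ ^ 4 := by
    have hsupp : support (fun x => ‖F x‖ ^ 2) = support F := by ext; simp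
    have h := sq_sum_le_ncard_support_mul_sum_sq (fun x => ‖F x‖ ^ 2)
    rw [hsupp] at h
    simpa only [← pow_mul] using h
  have hA : 0 < A := by
    obtain ⟨x, hx⟩ := Function.ne_iff.1 hF0
    refine pos_of_mul_pos_right (h2 ▸ ?_) (Nat.cast_nonneg (Fintype.card G))
    exact sum_pos' (fun x _ => by positivity) ⟨x, mem_univ x, pow_pos (norm_pos_iff.2 hx) 2⟩
  have key : (Fintype.card G : ℝ) * (Fintype.card G * A ^ 2) ≤
      (r * (support F).ncard) * (Fintype.card G * A ^ 2) :=
    calc (Fintype.card G : ℝ) * (Fintype.card G * A ^ 2) = (∑ x, ‖F x‖ ^ 2) ^ 2 := by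
          rw [h2]; ring
      _ ≤ (support F).ncard * (Fintype.card G * r * A ^ 2) := hCS.trans (by gcongr)
      _ = (r * (support F).ncard) * (Fintype.card G * A ^ 2) := by ring
  have hcard : (0 : ℝ) < Fintype.card G := by exact_mod_cast Fintype.card_pos
  exact_mod_cast le_of_mul_le_mul_right key (by positivity)

end Characters

section Counting

instance (N : ℕ) (p : N.primeFactors) : Fact (p : ℕ).Prime :=
  ⟨Nat.prime_of_mem_primeFactors p.2⟩

theorem injective_castHom_primeFactors {N : ℕ} (hN : Squarefree N) :
    Injective fun (x : ZMod N) (p : N.primeFactors) =>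
      ZMod.castHom (Nat.dvd_of_mem_primeFactors p.2) (ZMod p) x := by
  have hprod : N = ∏ p : N.primeFactors, (p : ℕ) :=
    (Nat.prod_primeFactors_of_squarefree hN).symm.trans (prod_coe_sort _ id).symm
  have hcop : Pairwise (Nat.Coprime on fun p : N.primeFactors => (p : ℕ)) := fun p q hpq =>
    (Nat.coprime_primes (Nat.prime_of_mem_primeFactors p.2)
      (Nat.prime_of_mem_primeFactors q.2)).2 (Subtype.coe_ne_coe.2 hpq)
  let e := (ZMod.ringEquivCongr hprod).trans (ZMod.prodEquivPi _ hcop)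
  convert e.injective using 1
  ext x p
  exact RingHom.congr_fun (Subsingleton.elim _ ((Pi.evalRingHom _ p).comp e.toRingHom)) x

theorem card_le_prod_card_of_castHom_mem {N : ℕ} (hN : Squarefree N)
    (s : Finset (ZMod N)) (S : ∀ p : N.primeFactors, Finset (ZMod p))
    (hs : ∀ x ∈ s, ∀ p, ZMod.castHom (Nat.dvd_of_mem_primeFactors p.2) (ZMod p) x ∈ S p) :
    #s ≤ ∏ p, #(S p) := by
  rw [← Fintype.card_piFinset]
  exact card_le_card_of_injOn _ (fun x hx => Fintype.mem_piFinset.2 (hs x hx))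
    (injective_castHom_primeFactors hN).injOn

theorem card_filter_sq_add_sq_eq_le_two {p : ℕ} [Fact p.Prime] (s q : ZMod p) :
    #{y : ZMod p | y ^ 2 + (s - y) ^ 2 = q} ≤ 2 := by
  rcases eq_or_ne p 2 with rfl | hp2
  · exact (card_le_univ _).trans (by simp)
  have h2 : (2 : ZMod p) ≠ 0 := by
    rw [← Nat.cast_two, Ne, ZMod.natCast_eq_zero_iff,
      Nat.prime_dvd_prime_iff_eq Fact.out Nat.prime_two]
    exact hp2
  -- completing the square: `(2y - s)² = 2(y² + (s - y)²) - s²`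
  calc #{y : ZMod p | y ^ 2 + (s - y) ^ 2 = q}
      ≤ #(Polynomial.nthRootsFinset 2 (2 * q - s ^ 2)) := by
        refine card_le_card_of_injOn (fun y => 2 * y - s) (fun y hy => ?_) fun y _ z _ hyz => ?_
        · rw [mem_coe, mem_filter] at hy
          rw [mem_coe, Polynomial.mem_nthRootsFinset two_pos, ← hy.2]
          ring
        · exact mul_left_cancel₀ h2 (sub_left_inj.1 hyz)
    _ ≤ 2 := by
        classical
        rw [Polynomial.nthRootsFinset_def]
        exact (Multiset.toFinset_card_le _).trans (Polynomial.card_nthRoots 2 _)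

theorem card_filter_add_eq_and_sq_add_sq_eq_le {N : ℕ} [NeZero N] (hN : Squarefree N)
    (s q : ZMod N) :
    #{x : ZMod N × ZMod N | x.1 + x.2 = s ∧ x.1 ^ 2 + x.2 ^ 2 = q} ≤ 2 ^ #N.primeFactors := by
  calc #{x : ZMod N × ZMod N | x.1 + x.2 = s ∧ x.1 ^ 2 + x.2 ^ 2 = q}
      ≤ #{y : ZMod N | y ^ 2 + (s - y) ^ 2 = q} := by
        refine card_le_card_of_injOn Prod.fst (fun x hx => ?_) fun x hx x' hx' hxx' => ?_
        · simp only [coe_filter, mem_univ, true_and, Set.mem_ofPred_eq] at hx ⊢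
          rw [← hx.1, add_sub_cancel_left, hx.2]
        · simp only [coe_filter, mem_univ, true_and, Set.mem_ofPred_eq] at hx hx'
          refine Prod.ext hxx' ?_
          rw [← add_right_inj x.1, hx.1, hxx', hx'.1]
    _ ≤ ∏ p : N.primeFactors, #{y : ZMod p | y ^ 2 + (s.cast - y) ^ 2 = q.cast} := by
        refine card_le_prod_card_of_castHom_mem hN _ _ fun y hy p => ?_
        simp only [mem_filter, mem_univ, true_and] at hy ⊢
        simpa only [map_add, map_pow, map_sub, ZMod.castHom_apply] using
          congrArg (ZMod.castHom (Nat.dvd_of_mem_primeFactors p.2) (ZMod p)) hy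
    _ ≤ 2 ^ #N.primeFactors := by
        simpa using prod_le_pow_card (univ : Finset N.primeFactors) _ 2
          fun p _ => card_filter_sq_add_sq_eq_le_two _ _

theorem exists_two_pow_card_primeFactors_le {δ : ℝ} (hδ : 0 < δ) :
    ∃ B : ℕ, ∀ N : ℕ, N ≠ 0 → (2 : ℝ) ^ #N.primeFactors ≤ 2 ^ B * (N : ℝ) ^ δ := by
  set B := ⌈(2 : ℝ) ^ δ⁻¹⌉₊
  refine ⟨B, fun N hN => ?_⟩
  -- `2 ≤ p ^ δ` once `p ≥ 2 ^ δ⁻¹`; each of the fewer than `B` smaller primes costs a factor `2`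
  have hprime (p : ℕ) (hp : p.Prime) : (2 : ℝ) ≤ (if p < B then 2 else 1) * (p : ℝ) ^ δ := by
    split_ifs with hpB
    · have : (1 : ℝ) ≤ (p : ℝ) ^ δ := Real.one_le_rpow (by exact_mod_cast hp.one_le) hδ.le
      linarith
    · calc (2 : ℝ) = ((2 : ℝ) ^ δ⁻¹) ^ δ := by
            rw [← Real.rpow_mul zero_le_two, inv_mul_cancel₀ hδ.ne', Real.rpow_one]
        _ ≤ 1 * (p : ℝ) ^ δ := by
            rw [one_mul]
            gcongr
            exact (Nat.le_ceil _).trans (by exact_mod_cast not_lt.1 hpB)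
  have hsmall : ∏ p ∈ N.primeFactors, (if p < B then (2 : ℝ) else 1) ≤ 2 ^ B := by
    rw [prod_ite, prod_const, prod_const_one, mul_one]
    gcongr
    · exact one_le_two
    · exact (card_le_card fun p hp => mem_range.2 (mem_filter.1 hp).2).trans (card_range B).le
  have hlarge : ∏ p ∈ N.primeFactors, (p : ℝ) ≤ N := by
    rw [← Nat.cast_prod]
    exact_mod_cast Nat.le_of_dvd (Nat.pos_of_ne_zero hN) (Nat.prod_primeFactors_dvd N)
  calc (2 : ℝ) ^ #N.primeFactors = ∏ p ∈ N.primeFactors, (2 : ℝ) := (prod_const _).symm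
    _ ≤ ∏ p ∈ N.primeFactors, (if p < B then 2 else 1) * (p : ℝ) ^ δ :=
        prod_le_prod (fun _ _ => zero_le_two) fun p hp =>
          hprime p (Nat.prime_of_mem_primeFactors hp)
    _ = (∏ p ∈ N.primeFactors, if p < B then (2 : ℝ) else 1) *
          (∏ p ∈ N.primeFactors, (p : ℝ)) ^ δ := by
        rw [prod_mul_distrib, Real.finsetProd_rpow _ _ fun p _ => Nat.cast_nonneg p]
    _ ≤ 2 ^ B * (N : ℝ) ^ δ := by
        gcongr

end Counting

section Plane

variable {N : ℕ} [NeZero N]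

noncomputable def dotChar (N : ℕ) [NeZero N] (ξ : ZMod N × ZMod N) :
    AddChar (ZMod N × ZMod N) ℂ where
  toFun x := ZMod.stdAddChar (x.1 * ξ.1 + x.2 * ξ.2)
  map_zero_eq_one' := by simp
  map_add_eq_mul' x y := by
    rw [← AddChar.map_add_eq_mul, Prod.fst_add, Prod.snd_add]
    ring_nf

@[simp]
theorem dotChar_apply (ξ x : ZMod N × ZMod N) :
    dotChar N ξ x = ZMod.stdAddChar (x.1 * ξ.1 + x.2 * ξ.2) := rfl

theorem dotChar_comm (ξ x : ZMod N × ZMod N) : dotChar N ξ x = dotChar N x ξ := by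
  simp only [dotChar_apply, mul_comm]

theorem dotChar_add (ξ η : ZMod N × ZMod N) : dotChar N (ξ + η) = dotChar N ξ + dotChar N η := by
  ext x
  rw [AddChar.add_apply, dotChar_apply, dotChar_apply, dotChar_apply, ← AddChar.map_add_eq_mul,
    Prod.fst_add, Prod.snd_add]
  ring_nf

theorem dotChar_injective : Injective (dotChar N) := by
  intro ξ η h
  have h₁ := DFunLike.congr_fun h (1, 0)
  have h₂ := DFunLike.congr_fun h (0, 1)
  simp only [dotChar_apply, one_mul, zero_mul, add_zero, zero_add,
    ZMod.injective_stdAddChar.eq_iff] at h₁ h₂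
  exact Prod.ext h₁ h₂

theorem dotChar_eq_zero_iff {ξ : ZMod N × ZMod N} : dotChar N ξ = 0 ↔ ξ = 0 := by
  have h0 : dotChar N 0 = 0 := by ext; simp
  rw [← h0, dotChar_injective.eq_iff]

theorem dft_eq_sum_dotChar (f : ZMod N × ZMod N → ℂ) (m : ZMod N × ZMod N) :
    dft N f m = (N : ℂ)⁻¹ * ∑ x, f x * dotChar N (-x) m := by
  have hkernel (u : ZMod N) : Complex.exp (-2 * Real.pi * Complex.I * ((u.val : ℕ) : ℂ) / N) =
      ZMod.stdAddChar (-u) := by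
    rw [show -u = ((-(u.val : ℤ) : ℤ) : ZMod N) by simp, ZMod.stdAddChar_coe]
    push_cast
    ring_nf
  unfold dft
  congr 1
  refine sum_congr rfl fun x _ => ?_
  rw [hkernel, dotChar_apply, Prod.fst_neg, Prod.snd_neg]
  ring_nf

theorem dft_sub (f g : ZMod N × ZMod N → ℂ) (m : ZMod N × ZMod N) :
    dft N (f - g) m = dft N f m - dft N g m := by
  simp only [dft_eq_sum_dotChar, Pi.sub_apply, sub_mul, sum_sub_distrib, mul_sub]

theorem sum_dft_mul_dotChar (h : ZMod N × ZMod N → ℂ) (x : ZMod N × ZMod N) :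
    ∑ m, dft N h m * dotChar N m x = N * h x := by
  classical
  have hN : (N : ℂ) ≠ 0 := NeZero.ne _
  have horth (y : ZMod N × ZMod N) :
      ∑ m, dotChar N (-y) m * dotChar N x m = if y = x then (N : ℂ) ^ 2 else 0 := by
    simp_rw [← AddChar.add_apply, ← dotChar_add, AddChar.sum_eq_ite, dotChar_eq_zero_iff,
      neg_add_eq_zero, Fintype.card_prod, ZMod.card, Nat.cast_mul, sq]
  calc ∑ m, dft N h m * dotChar N m x
      = (N : ℂ)⁻¹ * ∑ y, h y * ∑ m, dotChar N (-y) m * dotChar N x m := by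
        simp_rw [dotChar_comm _ x, dft_eq_sum_dotChar, mul_assoc, ← mul_sum, sum_mul, mul_sum]
        rw [sum_comm]
        simp_rw [mul_assoc]
    _ = N * h x := by
        simp_rw [horth, mul_ite, mul_zero, sum_ite_eq', mem_univ, if_true]
        field_simp

theorem eq_sum_dotChar_parabola {h : ZMod N × ZMod N → ℂ}
    (H0 : ∀ m ∉ parabola N, dft N h m = 0) (x : ZMod N × ZMod N) :
    h x = ∑ t, (N : ℂ)⁻¹ * dft N h (t, t ^ 2) * dotChar N (t, t ^ 2) x := by
  have hN : (N : ℂ) ≠ 0 := NeZero.ne _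
  have hsum : ∑ m, dft N h m * dotChar N m x =
      ∑ t, dft N h (t, t ^ 2) * dotChar N (t, t ^ 2) x := by
    rw [← sum_subset (subset_univ (parabola N)) fun m _ hm => by rw [H0 m hm, zero_mul], parabola,
      sum_image fun a _ b _ hab => (Prod.ext_iff.1 hab).1]
  rw [sum_dft_mul_dotChar] at hsum
  simp_rw [mul_assoc, ← mul_sum, ← hsum, inv_mul_cancel_left₀ hN]

theorem card_filter_dotChar_parabola_add_eq_le (hN : Squarefree N) (p : ZMod N × ZMod N) :
    #{q : ZMod N × ZMod N | dotChar N (q.1, q.1 ^ 2) + dotChar N (q.2, q.2 ^ 2) =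
      dotChar N (p.1, p.1 ^ 2) + dotChar N (p.2, p.2 ^ 2)} ≤ 2 ^ #N.primeFactors := by
  simp only [← dotChar_add, dotChar_injective.eq_iff, Prod.mk_add_mk, Prod.ext_iff]
  exact card_filter_add_eq_and_sq_add_sq_eq_le hN _ _

theorem sq_le_mul_ncard_support_of_dft_eq_zero (hN : Squarefree N) {h : ZMod N × ZMod N → ℂ}
    (H0 : ∀ m ∉ parabola N, dft N h m = 0) (hh : h ≠ 0) :
    N ^ 2 ≤ 2 ^ #N.primeFactors * (support h).ncard := by
  have hinj : Injective fun t : ZMod N => dotChar N (t, t ^ 2) :=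
    dotChar_injective.comp fun s t hst => (Prod.ext_iff.1 hst).1
  simpa [ZMod.card, sq] using card_le_mul_ncard_support_of_eq_sum_addChar hinj
    (card_filter_dotChar_parabola_add_eq_le hN) _ (eq_sum_dotChar_parabola H0) hh

end Plane

theorem exact_recovery_parabola (ε : ℝ) (hε : 0 < ε) :
    ∃ C : ℝ, 0 < C ∧ ∀ (N : ℕ) [NeZero N], Squarefree N →
      ∀ f g : ZMod N × ZMod N → ℂ,
        ((Function.support f).ncard : ℝ) + ((Function.support g).ncard : ℝ) <
          (N : ℝ) ^ ((2 : ℝ) - 2 * ε) / C ^ 8 →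
        (∀ m : ZMod N × ZMod N, m ∉ parabola N → dft N f m = dft N g m) →
        f = g := by
  obtain ⟨B, hB⟩ := exists_two_pow_card_primeFactors_le (mul_pos two_pos hε)
  refine ⟨2 ^ B, by positivity, fun N _ hN f g hsize hfg => ?_⟩
  by_contra hne
  have hsq := sq_le_mul_ncard_support_of_dft_eq_zero hN (h := f - g)
    (fun m hm => by rw [dft_sub, hfg m hm, sub_self]) (sub_ne_zero.2 hne)
  have hcard : (support (f - g)).ncard ≤ (support f).ncard + (support g).ncard :=
    (Set.ncard_le_ncard (support_sub f g)).trans (Set.ncard_union_le _ _)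
  have hsupp : ((support (f - g)).ncard : ℝ) < (N : ℝ) ^ ((2 : ℝ) - 2 * ε) / (2 ^ B) ^ 8 :=
    lt_of_le_of_lt (by exact_mod_cast hcard) hsize
  have hN0 : (0 : ℝ) < N := by exact_mod_cast Nat.pos_of_ne_zero (NeZero.ne N)
  have hpow : (N : ℝ) ^ (2 * ε) * N ^ ((2 : ℝ) - 2 * ε) = N ^ 2 := by
    rw [← Real.rpow_add hN0, add_sub_cancel, Real.rpow_two]
  refine lt_irrefl ((N : ℝ) ^ 2) ?_
  calc (N : ℝ) ^ 2 ≤ 2 ^ #N.primeFactors * (support (f - g)).ncard := by exact_mod_cast hsq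
    _ < 2 ^ B * N ^ (2 * ε) * (N ^ ((2 : ℝ) - 2 * ε) / (2 ^ B) ^ 8) :=
        mul_lt_mul' (hB N (NeZero.ne N)) hsupp (Nat.cast_nonneg _) (by positivity)
    _ = N ^ 2 / (2 ^ B) ^ 7 := by
        rw [← hpow]
        field_simp
    _ ≤ N ^ 2 := div_le_self (by positivity) (one_le_pow₀ (one_le_pow₀ one_le_two))
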